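/- Let L be a finite complete lattice and 𝒪 an ndao on L. Then: (1) every stable fixpoint (x, y) of 𝒪 is a fixpoint of 𝒪, i.e., x ∈ 𝒪ₗ(x,y) and y ∈ 𝒪ᵤ(x,y); and (2) if for every y ∈ L the operator x ↦ 𝒪ₗ(x,y) is downward closed and for every y ∈ L the operator x ↦ 𝒪ᵤ(x,y) is ⪯ˢ-anti-monotonic (x₁ ≤ x₂ implies 𝒪ᵤ(x₂,y) ⪯ˢ 𝒪ᵤ(x₁,y)), then every stable fixpoint (x, y) of 𝒪 is a ≤ₜ-minimal fixpoint of 𝒪: there is no fixpoint (x', y') of 𝒪 with (x', y') ≤ₜ (x, y) and (x', y') ≠ (x, y). -/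

import Mathlib

/-- The Smyth order: `X ⪯ˢ Y` iff every `y ∈ Y` has some `x ∈ X` with `x ≤ y`. -/
def SmythLE {L : Type*} [Preorder L] (X Y : Set L) : Prop :=
  ∀ y ∈ Y, ∃ x ∈ X, x ≤ y

/-- The Hoare order: `X ⪯ᴴ Y` iff every `x ∈ X` has some `y ∈ Y` with `x ≤ y`. -/
def HoareLE {L : Type*} [Preorder L] (X Y : Set L) : Prop :=
  ∀ x ∈ X, ∃ y ∈ Y, x ≤ y

/-- `(X₁, Y₁) ⪯ᴬᵢ (X₂, Y₂)` iff `X₁ ⪯ˢ X₂` and `Y₂ ⪯ᴴ Y₁`. -/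
def AiLE {L : Type*} [Preorder L] (X₁ Y₁ X₂ Y₂ : Set L) : Prop :=
  SmythLE X₁ X₂ ∧ HoareLE Y₂ Y₁

/-- A non-deterministic approximation operator (ndao) on a lattice `L`. -/
structure NDAO (L : Type*) [Lattice L] where
  l : L → L → Set L
  u : L → L → Set L
  l_nonempty : ∀ x y, (l x y).Nonempty
  u_nonempty : ∀ x y, (u x y).Nonempty
  mono : ∀ ⦃x₁ y₁ x₂ y₂ : L⦄, x₁ ≤ x₂ → y₂ ≤ y₁ →
    AiLE (l x₁ y₁) (u x₁ y₁) (l x₂ y₂) (u x₂ y₂)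
  isExact : ∀ x, l x x = u x x

/-- A non-deterministic operator is downward closed if for every nonempty chain
of pre-fixpoints, the infimum of the chain is again a pre-fixpoint. -/
def DownwardClosed {L : Type*} [CompleteLattice L] (O : L → Set L) : Prop :=
  ∀ C : Set L, C.Nonempty → IsChain (· ≤ ·) C →
    (∀ w ∈ C, SmythLE (O w) {w}) → SmythLE (O (sInf C)) {sInf C}

/-- The complete lower stable operator:
`C(𝒪ₗ)(y) = {x | x ∈ 𝒪ₗ(x,y), no x' < x with x' ∈ 𝒪ₗ(x',y)}`. -/
def Cl {L : Type*} [Lattice L] (O : NDAO L) (y : L) : Set L :=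
  {x | x ∈ O.l x y ∧ ¬ ∃ x' : L, x' < x ∧ x' ∈ O.l x' y}

/-- The complete upper stable operator:
`C(𝒪ᵤ)(x) = {y | y ∈ 𝒪ᵤ(x,y), no y' < y with y' ∈ 𝒪ᵤ(x,y')}`. -/
def Cu {L : Type*} [Lattice L] (O : NDAO L) (x : L) : Set L :=
  {y | y ∈ O.u x y ∧ ¬ ∃ y' : L, y' < y ∧ y' ∈ O.u x y'}


/-!
A stable fixpoint is a fixpoint by definition. For minimality, let `(x', y')` be a fixpoint
with `x' ≤ x` and `y' ≤ y`. By `⪯ᴬᵢ`-monotonicity, `x'` is a pre-fixpoint of `𝒪ₗ(·, y)`, and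
since `L` is finite, a minimal pre-fixpoint below `x'` is an actual fixpoint of `𝒪ₗ(·, y)`.
Minimality of `x` among those forces `x' = x`; then `y'` is a fixpoint of `𝒪ᵤ(x, ·)` below
`y`, and minimality of `y` forces `y' = y`.
-/

lemma smythLE_singleton_iff {L : Type*} [Preorder L] {X : Set L} {w : L} :
    SmythLE X {w} ↔ ∃ z ∈ X, z ≤ w := by
  simp [SmythLE]

lemma exists_mem_self_le_of_smythLE_singleton {L : Type*} [PartialOrder L] [WellFoundedLT L]
    {O : L → Set L} (hO : ∀ ⦃a b⦄, a ≤ b → SmythLE (O a) (O b)) {w : L}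
    (hw : SmythLE (O w) {w}) : ∃ v ≤ w, v ∈ O v := by
  obtain ⟨m, ⟨hmw, hm⟩, hmin⟩ :=
    (wellFounded_lt (α := L)).has_min {v | v ≤ w ∧ SmythLE (O v) {v}} ⟨w, le_rfl, hw⟩
  obtain ⟨z, hz, hzm⟩ := smythLE_singleton_iff.mp hm
  -- the witness `z` is itself a pre-fixpoint, so minimality of `m` forces `z = m`
  have hz_pre : SmythLE (O z) {z} := smythLE_singleton_iff.mpr (hO hzm z hz)
  have hzm_eq : z = m := hzm.eq_of_not_lt fun hlt => hmin z ⟨hzm.trans hmw, hz_pre⟩ hlt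
  exact ⟨m, hmw, hzm_eq ▸ hz⟩

namespace NDAO

variable {L : Type*} [Lattice L] (O : NDAO L)

lemma smythLE_l_of_le_left {x₁ x₂ : L} (h : x₁ ≤ x₂) (y : L) : SmythLE (O.l x₁ y) (O.l x₂ y) :=
  (O.mono h le_rfl).1

lemma smythLE_l_singleton_of_mem_of_le {x y' y : L} (hx : x ∈ O.l x y') (hy : y' ≤ y) :
    SmythLE (O.l x y) {x} :=
  smythLE_singleton_iff.mpr ((O.mono le_rfl hy).1 x hx)

lemma eq_of_mem_Cl_of_smythLE_singleton [WellFoundedLT L] {x x' y : L} (hx : x ∈ Cl O y)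
    (hx'x : x' ≤ x) (hx' : SmythLE (O.l x' y) {x'}) : x' = x := by
  obtain ⟨v, hvx', hv⟩ :=
    exists_mem_self_le_of_smythLE_singleton (fun _ _ h => O.smythLE_l_of_le_left h y) hx'
  have hvx : v = x := (hvx'.trans hx'x).eq_of_not_lt fun hlt => hx.2 ⟨v, hlt, hv⟩
  exact le_antisymm hx'x (hvx ▸ hvx')

lemma eq_of_mem_Cu_of_mem {x y y' : L} (hy : y ∈ Cu O x) (hy'y : y' ≤ y)
    (hy' : y' ∈ O.u x y') : y' = y :=
  hy'y.eq_of_not_lt fun hlt => hy.2 ⟨y', hlt, hy'⟩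

end NDAO

/-- On a finite complete lattice: (1) every stable fixpoint of an ndao is a
fixpoint; (2) if the lower component is downward closed and the upper component
is `⪯ˢ`-anti-monotonic in its first argument, every stable fixpoint is a
`≤ₜ`-minimal fixpoint. -/
theorem stable_fixpoints_are_minimal_fixpoints {L : Type*}
    [CompleteLattice L] [Finite L] (O : NDAO L) :
    (∀ x y : L, x ∈ Cl O y → y ∈ Cu O x → x ∈ O.l x y ∧ y ∈ O.u x y) ∧
    ((∀ y : L, DownwardClosed (fun x => O.l x y)) →
     (∀ y x₁ x₂ : L, x₁ ≤ x₂ → SmythLE (O.u x₂ y) (O.u x₁ y)) →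
     ∀ x y : L, x ∈ Cl O y → y ∈ Cu O x →
       ¬ ∃ x' y' : L, x' ∈ O.l x' y' ∧ y' ∈ O.u x' y' ∧
         x' ≤ x ∧ y' ≤ y ∧ (x', y') ≠ (x, y)) := by
  refine ⟨fun x y hx hy => ⟨hx.1, hy.1⟩, fun _ _ x y hx hy => ?_⟩
  rintro ⟨x', y', hl, hu, hx'x, hy'y, hne⟩
  obtain rfl : x' = x :=
    O.eq_of_mem_Cl_of_smythLE_singleton hx hx'x (O.smythLE_l_singleton_of_mem_of_le hl hy'y)
  obtain rfl : y' = y := O.eq_of_mem_Cu_of_mem hy hy'y hu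
  exact hne rfl
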